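/- arXiv:1807.04782 — 6 statements merged into one kernel-verified Lean document; each statement's English description precedes it below -/
import Mathlib

section
/- Let p be a prime, and let n, k be positive integers with gcd(n,k) = d. Then the image of the map y ↦ y^(p^k) - y on the finite field F_{p^n} equals the image of the map y ↦ y^(p^d) - y on F_{p^n}. -/
/-- If `y ^ p ^ a = y` then `y ^ p ^ (a * b) = y`. -/
lemma aux_pow_mul {F : Type*} [Monoid F] {p : ℕ} (y : F) (a : ℕ) (b : ℕ)
    (h : y ^ p ^ a = y) : y ^ p ^ (a * b) = y := by
  induction b with
  | zero => simp
  | succ b ih =>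
    have : p ^ (a * (b + 1)) = p ^ (a * b) * p ^ a := by ring
    rw [this, pow_mul, ih, h]

/-- Euclidean descent: fixed by `p^a`-th and `p^b`-th power maps implies fixed by
`p^(gcd a b)`-th power. -/
lemma aux_pow_gcd {F : Type*} [Monoid F] {p : ℕ} (y : F) (a b : ℕ)
    (ha : y ^ p ^ a = y) (hb : y ^ p ^ b = y) : y ^ p ^ Nat.gcd a b = y := by
  induction a, b using Nat.gcd.induction with
  | H0 b => simpa
  | H1 a b hapos ih =>
    rw [Nat.gcd_rec]
    have hdecomp : b = a * (b / a) + b % a := (Nat.div_add_mod' b a).symm.trans (by ring)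
    have hr : y ^ p ^ (b % a) = y := by
      have : y ^ p ^ b = y ^ p ^ (b % a) := by
        conv_lhs => rw [hdecomp]
        rw [pow_add, pow_mul, aux_pow_mul y a (b / a) ha]
      rw [← this, hb]
    exact ih hr ha

theorem stmt_0 (p n k d : ℕ) (hp : p.Prime) (hn : 0 < n) (hk : 0 < k)
    (hd : Nat.gcd n k = d)
    (F : Type*) [Field F] [Fintype F] (hF : Fintype.card F = p ^ n) :
    Set.range (fun y : F => y ^ p ^ k - y) =
      Set.range (fun y : F => y ^ p ^ d - y) := by
  haveI : Fact p.Prime := ⟨hp⟩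
  -- characteristic of F is p
  haveI hchar : CharP F p := by
    haveI hc : CharP F (ringChar F) := ringChar.charP F
    obtain ⟨m, hq, hcard⟩ := FiniteField.card F (ringChar F)
    have hpq : p = ringChar F := by
      have hdvd : p ∣ ringChar F ^ (m : ℕ) := by
        rw [← hcard, hF]
        exact dvd_pow_self p hn.ne'
      have := (Nat.Prime.dvd_of_dvd_pow hp hdvd)
      exact ((Nat.prime_dvd_prime_iff_eq hp hq).mp this)
    rwa [hpq]
  haveI : ExpChar F p := ExpChar.prime hp
  have hyn : ∀ y : F, y ^ p ^ n = y := by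
    intro y; rw [← hF]; exact FiniteField.pow_card y
  -- the two additive monoid homs
  set gk : F →+ F :=
    (iterateFrobenius F p k).toAddMonoidHom - AddMonoidHom.id F with hgk
  set gd : F →+ F :=
    (iterateFrobenius F p d).toAddMonoidHom - AddMonoidHom.id F with hgd
  have hgk_apply : ∀ y : F, gk y = y ^ p ^ k - y := by
    intro y; simp [hgk, iterateFrobenius_def]
  have hgd_apply : ∀ y : F, gd y = y ^ p ^ d - y := by
    intro y; simp [hgd, iterateFrobenius_def]
  -- kernels coincide
  have hker : gk.ker = gd.ker := by
    ext y
    simp only [AddMonoidHom.mem_ker, hgk_apply, hgd_apply, sub_eq_zero]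
    constructor
    · intro hy
      have := aux_pow_gcd y n k (hyn y) hy
      rwa [hd] at this
    · intro hy
      obtain ⟨m, rfl⟩ : d ∣ k := hd ▸ Nat.gcd_dvd_right n k
      exact aux_pow_mul y d m hy
  -- ranges as sets
  have hrk : Set.range (fun y : F => y ^ p ^ k - y) = (gk.range : Set F) := by
    ext x; simp [AddMonoidHom.mem_range, hgk_apply, eq_comm]
  have hrd : Set.range (fun y : F => y ^ p ^ d - y) = (gd.range : Set F) := by
    ext x; simp [AddMonoidHom.mem_range, hgd_apply, eq_comm]
  -- inclusion : range gk ⊆ range gd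
  have hsub : Set.range (fun y : F => y ^ p ^ k - y) ⊆
      Set.range (fun y : F => y ^ p ^ d - y) := by
    rintro x ⟨y, rfl⟩
    obtain ⟨m, hm⟩ : d ∣ k := hd ▸ Nat.gcd_dvd_right n k
    refine ⟨∑ i ∈ Finset.range m, y ^ p ^ (d * i), ?_⟩
    have hfrob : (∑ i ∈ Finset.range m, y ^ p ^ (d * i)) ^ p ^ d =
        ∑ i ∈ Finset.range m, y ^ p ^ (d * (i + 1)) := by
      have := map_sum (iterateFrobenius F p d)
        (fun i => y ^ p ^ (d * i)) (Finset.range m)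
      simp only [iterateFrobenius_def] at this
      rw [this]
      apply Finset.sum_congr rfl
      intro i _
      rw [← pow_mul, ← pow_add]
      ring_nf
    simp only [hfrob]
    rw [← Finset.sum_sub_distrib]
    have : ∀ i ∈ Finset.range m,
        y ^ p ^ (d * (i + 1)) - y ^ p ^ (d * i) =
          (fun j => y ^ p ^ (d * j)) (i + 1) - (fun j => y ^ p ^ (d * j)) i := by
      intro i _; rfl
    rw [Finset.sum_congr rfl this, Finset.sum_range_sub (fun j => y ^ p ^ (d * j))]
    simp [← hm]
  -- cardinalities of the ranges agree
  have hcard : (Set.range (fun y : F => y ^ p ^ d - y)).ncard ≤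
      (Set.range (fun y : F => y ^ p ^ k - y)).ncard := by
    have e1 : (F ⧸ gk.ker) ≃ gk.range :=
      (QuotientAddGroup.quotientKerEquivRange gk).toEquiv
    have e2 : (F ⧸ gd.ker) ≃ gd.range :=
      (QuotientAddGroup.quotientKerEquivRange gd).toEquiv
    have : Nat.card gk.range = Nat.card gd.range := by
      rw [← Nat.card_congr e1, ← Nat.card_congr e2, hker]
    have hk' : (gk.range : Set F).ncard = Nat.card gk.range := by
      rw [← Nat.card_coe_set_eq]; rfl
    have hd' : (gd.range : Set F).ncard = Nat.card gd.range := by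
      rw [← Nat.card_coe_set_eq]; rfl
    rw [hrk, hrd, hk', hd', this]
  exact Set.eq_of_subset_of_ncard_le hsub hcard
end

section
/- Let p be an odd prime and let n, k be positive integers with gcd(n,k) = d. Suppose k/d is odd and n/d is even. Then the image of the map y ↦ y^(p^d) + y on F_{p^n} equals the image of the map y ↦ y^(p^k) + y on F_{p^n}. -/
/-!
Write `σ y = y ^ p ^ d`, an additive endomorphism in characteristic `p`. For odd `s`, the
identity `X ^ s + 1 = (X + 1) * g` in `ℤ[X]`, evaluated at an additive endomorphism `τ`, shows
that the image of `τ ^ s + 1` lies in the image of `τ + 1`. Taking `τ = σ` and `s = k / d`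
gives one inclusion. For the other, Bézout gives an odd `s` with `k * s ≡ d [MOD n]` (odd
because `n / d` is even), so `(y ↦ y ^ p ^ k) ^ s = σ` on `F_{p^n}`, and the same identity
applies with `τ = y ↦ y ^ p ^ k`.
-/

open Polynomial

theorem Module.End.range_pow_add_one_le_of_odd {R M : Type*} [CommRing R] [AddCommGroup M]
    [Module R M] (f : Module.End R M) {s : ℕ} (hs : Odd s) :
    LinearMap.range (f ^ s + 1) ≤ LinearMap.range (f + 1) := by
  obtain ⟨g, hg⟩ := hs.add_dvd_pow_add_pow (X : R[X]) 1
  have hfactor : f ^ s + 1 = (f + 1) * aeval f g := by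
    simpa using congrArg (aeval f) hg
  rw [hfactor, Module.End.mul_eq_comp]
  exact LinearMap.range_comp_le_range _ _

theorem range_pow_pow_mul_add_subset {R : Type*} [CommRing R] (p : ℕ) [ExpChar R p] (e : ℕ)
    {s : ℕ} (hs : Odd s) :
    Set.range (fun y : R => y ^ p ^ (e * s) + y) ⊆ Set.range (fun y : R => y ^ p ^ e + y) := by
  let σ : Module.End ℤ R := (iterateFrobenius R p e).toAddMonoidHom.toIntLinearMap
  have hσ : ∀ y, σ y = y ^ p ^ e := fun _ => rfl
  have hσpow : ∀ y, (σ ^ s) y = y ^ p ^ (e * s) := fun y => by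
    rw [Module.End.pow_apply, ← iterateFrobenius_def, iterateFrobenius_mul_apply]; rfl
  rintro _ ⟨y, rfl⟩
  obtain ⟨z, hz⟩ := σ.range_pow_add_one_le_of_odd hs ⟨y, rfl⟩
  exact ⟨z, by simpa [hσ, hσpow] using hz⟩

theorem FiniteField.pow_pow_mul_add {K : Type*} [Field K] [Fintype K] {p n : ℕ}
    (hK : Fintype.card K = p ^ n) (a : K) (j e : ℕ) : a ^ p ^ (n * j + e) = a ^ p ^ e := by
  rw [pow_add, pow_mul a, pow_mul p, ← hK, FiniteField.pow_card_pow]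

theorem Nat.exists_odd_mul_eq_mul_add_gcd {n k : ℕ} (hn : 0 < n) (heven : Even (n / gcd n k)) :
    ∃ s j, Odd s ∧ k * s = n * j + gcd n k := by
  have hd : 0 < gcd n k := gcd_pos_of_pos_left k hn
  have hcop : Coprime (k / gcd n k) (n / gcd n k) := (coprime_div_gcd_div_gcd hd).symm
  have hm0 : 0 < n / gcd n k := Nat.div_pos (gcd_le_left k hn) hd
  have hn' : n = gcd n k * (n / gcd n k) := (Nat.mul_div_cancel' (gcd_dvd_left n k)).symm
  have hk' : k = gcd n k * (k / gcd n k) := (Nat.mul_div_cancel' (gcd_dvd_right n k)).symm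
  set d := gcd n k
  set m := n / d
  set t := k / d
  have hm1 : 1 < m := by
    obtain ⟨r, hr⟩ := heven
    omega
  obtain ⟨s, -, hs⟩ := exists_mul_mod_eq_one_of_coprime hcop hm1
  obtain ⟨j, hts⟩ : ∃ j, t * s = m * j + 1 := ⟨t * s / m, by rw [← hs, div_add_mod]⟩
  refine ⟨s, j, (odd_mul.mp (hts ▸ (heven.mul_right j).add_one)).2, ?_⟩
  calc k * s = d * (t * s) := by rw [hk', mul_assoc]
    _ = n * j + d := by rw [hts, hn']; ring

theorem stmt_1_general (p n k d : ℕ) (hp : p.Prime) (hn : 0 < n)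
    (hd : Nat.gcd n k = d) (hkd : Odd (k / d)) (hnd : Even (n / d))
    (F : Type*) [Field F] [Fintype F] (hF : Fintype.card F = p ^ n) :
    Set.range (fun y : F => y ^ p ^ d + y) =
      Set.range (fun y : F => y ^ p ^ k + y) := by
  have : Fact p.Prime := ⟨hp⟩
  have : CharP F p := charP_of_card_eq_prime_pow hF
  subst hd
  apply Set.Subset.antisymm
  · obtain ⟨s, j, hs, hks⟩ := Nat.exists_odd_mul_eq_mul_add_gcd hn hnd
    have hperiod : ∀ y : F, y ^ p ^ (k * s) = y ^ p ^ Nat.gcd n k := fun y => by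
      rw [hks, FiniteField.pow_pow_mul_add hF]
    simpa only [hperiod] using range_pow_pow_mul_add_subset (R := F) p k hs
  · conv_lhs => rw [← Nat.mul_div_cancel' (Nat.gcd_dvd_right n k)]
    exact range_pow_pow_mul_add_subset (R := F) p _ hkd

theorem stmt_1 (p n k d : ℕ) (hp : p.Prime) (hodd : Odd p) (hn : 0 < n) (hk : 0 < k)
    (hd : Nat.gcd n k = d) (hkd : Odd (k / d)) (hnd : Even (n / d))
    (F : Type*) [Field F] [Fintype F] (hF : Fintype.card F = p ^ n) :
    Set.range (fun y : F => y ^ p ^ d + y) =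
      Set.range (fun y : F => y ^ p ^ k + y) :=
  stmt_1_general p n k d hp hn hd hkd hnd F hF
end

section
/- Let p be an odd prime and k a positive integer. The number of pairs (x,y) ∈ F_{p^{2k}} × F_{p^{2k}} satisfying y^(p^k) + y = x^2 is p^{2k} + (p^k - 1) p^k. -/
open Finset Polynomial

lemma aux_count (q : ℕ) (hq1 : 1 < q) (hqodd : Odd q)
    (F : Type*) [Field F] [Fintype F] (hcard : Fintype.card F = q * q)
    (h2F : (2 : F) ≠ 0)
    (hfrob : ∀ x y : F, (x + y) ^ q = x ^ q + y ^ q) :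
    Nat.card {xy : F × F // xy.2 ^ q + xy.2 = xy.1 ^ 2} = q * q + (q - 1) * q := by
  classical
  obtain ⟨n, hqn⟩ := hqodd
  have hn1 : 1 ≤ n := by omega
  have hmul : q * q = 4 * (n * n) + 4 * n + 1 := by rw [hqn]; ring
  have hnn : n ≤ n * n := Nat.le_mul_of_pos_left n (by omega)
  obtain ⟨a, ha⟩ : ∃ a, n * n = a := ⟨_, rfl⟩
  rw [ha] at hmul hnn
  have hq0 : 0 < q := by omega
  have hsub : ∀ x y : F, (x - y) ^ q = x ^ q - y ^ q := by
    intro x y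
    have := hfrob (x - y) y
    rw [sub_add_cancel] at this
    rw [eq_sub_iff_add_eq, ← this]
  have hpowF : ∀ y : F, y ^ (q * q) = y := by
    intro y; rw [← hcard, FiniteField.pow_card]
  -- the element w with w ≠ 0, w ^ q = -w
  obtain ⟨w, hw0, hwq⟩ : ∃ w : F, w ≠ 0 ∧ w ^ q = -w := by
    obtain ⟨g, hg⟩ := IsCyclic.exists_generator (α := Fˣ)
    have hcu : Fintype.card Fˣ = q * q - 1 := by rw [Fintype.card_units, hcard]
    have hord : orderOf g = q * q - 1 := by
      rw [orderOf_eq_card_of_forall_mem_zpowers hg, Nat.card_eq_fintype_card, hcu]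
    set t : Fˣ := g ^ ((q * q - 1) / 2) with ht
    have ht2 : t ^ 2 = 1 := by
      rw [ht, ← pow_mul, show (q * q - 1) / 2 * 2 = q * q - 1 by omega, ← hord,
        pow_orderOf_eq_one]
    have htne : t ≠ 1 := by
      intro h
      have hdvd := orderOf_dvd_of_pow_eq_one (ht ▸ h)
      rw [hord] at hdvd
      have hle := Nat.le_of_dvd (by omega) hdvd
      omega
    have htF : (t : F) = -1 := by
      have h1 : (t : F) ^ 2 = 1 := by rw [← Units.val_pow_eq_pow_val, ht2, Units.val_one]
      rcases sq_eq_one_iff.mp h1 with h | h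
      · exact absurd (Units.ext h) htne
      · exact h
    refine ⟨(g ^ ((q + 1) / 2) : Fˣ), Units.ne_zero _, ?_⟩
    have harith : (q + 1) / 2 * (q - 1) = (q * q - 1) / 2 := by
      have e1 : (q + 1) / 2 = n + 1 := by omega
      have e2 : q - 1 = 2 * n := by omega
      have e3 : (q * q - 1) / 2 = 2 * a + 2 * n := by omega
      rw [e1, e2, e3, ← ha]; ring
    have htF' : (g : F) ^ ((q * q - 1) / 2) = -1 := by
      rw [← Units.val_pow_eq_pow_val, ← ht, htF]
    have harith2 : (q + 1) / 2 * q = (q * q - 1) / 2 + (q + 1) / 2 := by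
      have e1 : (q + 1) / 2 = n + 1 := by omega
      have e3 : (q * q - 1) / 2 = 2 * a + 2 * n := by omega
      rw [e1, e3, hqn, ← ha]; ring
    simp only [Units.val_pow_eq_pow_val]
    rw [← pow_mul, harith2, pow_add, htF']
    ring
  -- Finsets S (subfield elements) and Kk (kernel of trace)
  set S : Finset F := univ.filter (fun s => s ^ q = s) with hS
  set Kk : Finset F := univ.filter (fun z => z ^ q = -z) with hKk
  have hKimage : Kk = S.image (fun s => w * s) := by
    ext z
    simp only [hKk, hS, mem_filter, mem_univ, true_and, mem_image]
    constructor
    · intro hz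
      refine ⟨w⁻¹ * z, ?_, by field_simp⟩
      have hwq' : (w⁻¹) ^ q = -w⁻¹ := by
        rw [inv_pow, hwq, ← neg_inv]
      rw [mul_pow, hz, hwq']
      ring
    · rintro ⟨s, hs, rfl⟩
      rw [mul_pow, hs, hwq]
      ring
  have hKcard : Kk.card = S.card := by
    rw [hKimage, card_image_of_injective _ (mul_right_injective₀ hw0)]
  -- S.card ≤ q via roots of X^q - X
  have hSle : S.card ≤ q := by
    have hdeg : (X ^ q - X : F[X]).natDegree = q := by
      rw [natDegree_sub_eq_left_of_natDegree_lt] <;>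
        simp [natDegree_X_pow, natDegree_X, hq1]
    have hP0 : (X ^ q - X : F[X]) ≠ 0 := by
      apply Polynomial.ne_zero_of_natDegree_gt (n := 0)
      omega
    have hsub2 : S ⊆ (X ^ q - X : F[X]).roots.toFinset := by
      intro s hs
      rw [Multiset.mem_toFinset, mem_roots hP0]
      have := (mem_filter.mp hs).2
      simp [Polynomial.IsRoot, sub_eq_zero, this]
    calc S.card ≤ (X ^ q - X : F[X]).roots.toFinset.card := card_le_card hsub2
      _ ≤ Multiset.card (X ^ q - X : F[X]).roots := Multiset.toFinset_card_le _
      _ ≤ (X ^ q - X : F[X]).natDegree := Polynomial.card_roots' _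
      _ = q := hdeg
  -- the trace-like map and its image
  have hTmem : ∀ y : F, (y ^ q + y) ^ q = y ^ q + y := by
    intro y
    rw [hfrob, ← pow_mul, hpowF, add_comm]
  set I : Finset F := univ.image (fun y : F => y ^ q + y) with hI
  have hIS : I ⊆ S := by
    intro c hc
    obtain ⟨y, _, rfl⟩ := mem_image.mp hc
    exact mem_filter.mpr ⟨mem_univ _, hTmem y⟩
  -- all nonempty fibers have card S.card
  have hfibcard : ∀ c : F, ∀ y₀ : F, y₀ ^ q + y₀ = c →
      (univ.filter fun y => y ^ q + y = c).card = S.card := by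
    intro c y₀ h₀
    rw [← hKcard]
    have himg : (univ.filter fun y => y ^ q + y = c) = Kk.image (fun u => y₀ + u) := by
      ext z
      simp only [hKk, mem_filter, mem_univ, true_and, mem_image]
      constructor
      · intro hz
        refine ⟨z - y₀, ?_, by ring⟩
        rw [hsub]
        have h1 : z ^ q = c - z := by rw [← hz]; ring
        have h2 : y₀ ^ q = c - y₀ := by rw [← h₀]; ring
        rw [h1, h2]
        ring
      · rintro ⟨u, hu, rfl⟩
        rw [hfrob, hu]
        rw [← h₀]
        ring
    rw [himg, card_image_of_injective _ (add_right_injective y₀)]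
  -- double counting: q*q = I.card * S.card
  have hcount : q * q = I.card * S.card := by
    have hfw : ∀ y : F, y ∈ (univ : Finset F) → (y ^ q + y) ∈ I :=
      fun y _ => mem_image_of_mem _ (mem_univ y)
    have h1 := Finset.card_eq_sum_card_fiberwise hfw
    rw [card_univ, hcard] at h1
    rw [h1]
    rw [Finset.sum_congr rfl (fun c hc => ?_), sum_const, smul_eq_mul]
    obtain ⟨y₀, _, h₀⟩ := mem_image.mp hc
    exact hfibcard c y₀ h₀
  have hScard : S.card = q := by
    have h1 : I.card ≤ S.card := card_le_card hIS
    have h3 : q * q ≤ S.card * q :=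
      calc q * q = I.card * S.card := hcount
        _ ≤ S.card * S.card := Nat.mul_le_mul_right _ h1
        _ ≤ S.card * q := Nat.mul_le_mul_left _ hSle
    exact le_antisymm hSle (Nat.le_of_mul_le_mul_right h3 hq0)
  have hIcard : I.card = q := by
    rw [hScard] at hcount
    exact (Nat.eq_of_mul_eq_mul_right hq0 hcount.symm)
  have hIeqS : I = S := Finset.eq_of_subset_of_card_le hIS (by rw [hScard, hIcard])
  -- empty fibers
  have hfib0 : ∀ c : F, c ∉ S → (univ.filter fun y => y ^ q + y = c).card = 0 := by
    intro c hc
    rw [card_eq_zero, filter_eq_empty_iff]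
    intro y _ h
    exact hc (hIeqS ▸ (h ▸ mem_image_of_mem (fun y : F => y ^ q + y) (mem_univ y)))
  -- set of good x's
  set B : Finset F := univ.filter (fun x => x ^ 2 ∈ S) with hB
  have hBunion : B = S ∪ Kk := by
    ext x
    simp only [hB, hS, hKk, mem_filter, mem_univ, true_and, mem_union]
    rw [show (x ^ 2) ^ q = (x ^ q) ^ 2 by rw [← pow_mul, mul_comm, pow_mul]]
    exact sq_eq_sq_iff_eq_or_eq_neg
  have hSKinter : S ∩ Kk = {0} := by
    ext x
    simp only [hS, hKk, mem_inter, mem_filter, mem_univ, true_and, mem_singleton]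
    constructor
    · rintro ⟨h1, h2⟩
      rw [h1] at h2
      have hx : x + x = 0 := add_eq_zero_iff_eq_neg.mpr h2
      have : (2 : F) * x = 0 := by rw [two_mul, hx]
      rcases mul_eq_zero.mp this with h | h
      · exact absurd h h2F
      · exact h
    · rintro rfl
      constructor <;> simp [zero_pow hq0.ne']
  have hBcard : B.card = q + (q - 1) := by
    have h1 := Finset.card_union_add_card_inter S Kk
    rw [hSKinter, card_singleton, hKcard, hScard] at h1
    rw [hBunion]
    omega
  -- final computation
  rw [Nat.card_eq_fintype_card,
    Fintype.card_congr (Equiv.subtypeProdEquivSigmaSubtype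
      (fun (a b : F) => b ^ q + b = a ^ 2)),
    Fintype.card_sigma]
  have hterm : ∀ x : F, Fintype.card {y : F // y ^ q + y = x ^ 2} =
      (univ.filter fun y => y ^ q + y = x ^ 2).card := fun x => Fintype.card_subtype _
  rw [Finset.sum_congr rfl (fun x _ => hterm x),
    ← Finset.sum_filter_add_sum_filter_not univ (fun x => x ^ 2 ∈ S)]
  have hsum1 : ∑ x ∈ univ.filter (fun x => x ^ 2 ∈ S),
      (univ.filter fun y => y ^ q + y = x ^ 2).card = (q + (q - 1)) * q := by
    rw [Finset.sum_congr rfl (fun x hx => ?_), sum_const, smul_eq_mul, ← hB, hBcard]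
    have hx2 : x ^ 2 ∈ S := (mem_filter.mp hx).2
    rw [← hIeqS] at hx2
    obtain ⟨y₀, _, h₀⟩ := mem_image.mp hx2
    rw [hfibcard (x ^ 2) y₀ h₀, hScard]
  have hsum2 : ∑ x ∈ univ.filter (fun x => ¬ x ^ 2 ∈ S),
      (univ.filter fun y => y ^ q + y = x ^ 2).card = 0 := by
    apply Finset.sum_eq_zero
    intro x hx
    exact hfib0 _ (mem_filter.mp hx).2
  rw [hsum1, hsum2, add_zero, add_mul]

theorem stmt_2 (p k : ℕ) (hp : p.Prime) (hodd : Odd p) (hk : 0 < k)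
    (F : Type*) [Field F] [Fintype F] (hF : Fintype.card F = p ^ (2 * k)) :
    Nat.card {xy : F × F // xy.2 ^ p ^ k + xy.2 = xy.1 ^ 2} =
      p ^ (2 * k) + (p ^ k - 1) * p ^ k := by
  have hcharp : CharP F p := by
    have h1 : ringChar F ∣ p ^ (2 * k) := by
      rw [← hF]
      exact (CharP.cast_eq_zero_iff F (ringChar F) _).mp (Nat.cast_card_eq_zero F)
    have h2 : (ringChar F).Prime := CharP.char_is_prime F (ringChar F)
    have h3 : ringChar F = p :=
      (Nat.prime_dvd_prime_iff_eq h2 hp).mp (h2.dvd_of_dvd_pow h1)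
    exact h3 ▸ ringChar.charP F
  haveI := hcharp
  haveI : Fact p.Prime := ⟨hp⟩
  have h2F : (2 : F) ≠ 0 := by
    intro h
    have h' : ((2 : ℕ) : F) = 0 := by exact_mod_cast h
    have hd := (CharP.cast_eq_zero_iff F p 2).mp h'
    have hp2 : p = 2 := (Nat.prime_dvd_prime_iff_eq hp Nat.prime_two).mp hd
    rw [Nat.odd_iff, hp2] at hodd
    simp at hodd
  have main := aux_count (p ^ k) (Nat.one_lt_pow hk.ne' hp.one_lt) hodd.pow F
      (by rw [hF, ← pow_add, two_mul]) h2F (fun x y => add_pow_char_pow x y p k)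
  rw [show p ^ (2 * k) = p ^ k * p ^ k from by rw [← pow_add, two_mul]]
  exact main
end

section
/- Let p be an odd prime, k a positive integer, t an odd positive integer, and let μ be a nonzero element of F_{p^{2k}} with μ^{p^k} = −μ. Then the number of pairs (x,y) ∈ F_{p^{2kt}} × F_{p^{2kt}} satisfying y^{p^k} − y = μ·x^{p^{kt}+1} equals p^{k} · p^{2kt}. -/
/-!
Write `q = p ^ k`. On `F = 𝔽_{q^{2t}}` the Artin–Schreier map `y ↦ y ^ q - y` is additive, and its
image lies in the kernel of the trace `c ↦ ∑_{i < 2t} c ^ (q ^ i)` to `𝔽_q` (the sum telescopes).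
Counting roots, its kernel has at most `q` elements and the kernel of the trace at most `q ^ (2t-1)`;
since the two cardinalities multiply to `q ^ (2t)`, the kernel has exactly `q` elements and the
image is exactly the trace-zero set. For `c = μ x ^ (q ^ t + 1)` we have `c ^ (q ^ t) = -c`, because
`μ ^ (q ^ t) = -μ` for odd `t` and `x ^ (q ^ (2t)) = x`; so the terms of the trace of `c` cancel in
pairs, and every `x` has exactly `q` solutions `y`.
-/

open Polynomial Finset

theorem AddMonoidHom.natCard_fiber_eq_natCard_ker {G H : Type*} [AddGroup G] [AddGroup H]
    (f : G →+ H) {c : H} (hc : c ∈ f.range) : Nat.card {y // f y = c} = Nat.card f.ker := by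
  obtain ⟨a, rfl⟩ := hc
  exact Nat.card_congr (f.fiberEquivKer a)

theorem AddMonoidHom.natCard_ker_mul_natCard_range {G H : Type*} [AddGroup G] [AddGroup H]
    (f : G →+ H) : Nat.card f.ker * Nat.card f.range = Nat.card G := by
  rw [← AddSubgroup.index_ker, AddSubgroup.card_mul_index]

theorem Polynomial.ncard_setOf_eval_eq_zero_le {F : Type*} [Field F] {P : F[X]} (hP : P ≠ 0) :
    {z | P.eval z = 0}.ncard ≤ P.natDegree := by
  convert ncard_rootSet_le P F using 2
  ext z
  simp [mem_rootSet_of_ne hP]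

section ArtinSchreier

variable {F : Type*} [Field F] (p k : ℕ)

-- For `Fintype.card F = p ^ (k * n)` this is the trace of `F` over its subfield of order `p ^ k`.
def frobeniusTrace (n : ℕ) (c : F) : F := ∑ i ∈ range n, c ^ p ^ (k * i)

variable {p k}

theorem ncard_frobeniusTrace_eq_zero_le (hp : 1 < p) (hk : k ≠ 0) {n : ℕ} (hn : n ≠ 0) :
    {c : F | frobeniusTrace p k n c = 0}.ncard ≤ p ^ (k * (n - 1)) := by
  set P : F[X] := ∑ i ∈ range n, X ^ p ^ (k * i)
  have hmono : StrictMono fun i => p ^ (k * i) :=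
    (pow_right_strictMono₀ hp).comp (strictMono_mul_left_of_pos (Nat.pos_of_ne_zero hk))
  have hlead : P.coeff (p ^ (k * (n - 1))) = 1 := by
    simp [P, coeff_X_pow, hmono.injective.eq_iff, hn]
  have hdeg : P.natDegree ≤ p ^ (k * (n - 1)) := by
    refine natDegree_sum_le_of_forall_le _ _ fun i hi => ?_
    rw [natDegree_X_pow]
    exact hmono.monotone (by simp at hi; omega)
  calc {c : F | frobeniusTrace p k n c = 0}.ncard
      = {c : F | P.eval c = 0}.ncard := by simp [P, frobeniusTrace, eval_finsetSum]
    _ ≤ P.natDegree := ncard_setOf_eval_eq_zero_le fun h => by simp [h] at hlead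
    _ ≤ _ := hdeg

variable (p k) [ExpChar F p]

def artinSchreier : F →+ F :=
  (iterateFrobenius F p k).toAddMonoidHom - AddMonoidHom.id F

theorem artinSchreier_apply (y : F) : artinSchreier p k y = y ^ p ^ k - y := rfl

variable {p k}

theorem natCard_ker_artinSchreier_le (hp : 1 < p) (hk : k ≠ 0) :
    Nat.card (artinSchreier (F := F) p k).ker ≤ p ^ k := by
  have hq : 1 < p ^ k := Nat.one_lt_pow hk hp
  calc Nat.card (artinSchreier (F := F) p k).ker
      = {z : F | (X ^ p ^ k - X : F[X]).eval z = 0}.ncard := by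
        rw [← Nat.card_coe_set_eq]
        congr! 2
        ext z
        simp [artinSchreier_apply]
    _ ≤ (X ^ p ^ k - X : F[X]).natDegree :=
        ncard_setOf_eval_eq_zero_le (FiniteField.X_pow_card_sub_X_ne_zero F hq)
    _ = p ^ k := FiniteField.X_pow_card_sub_X_natDegree_eq F hq

theorem frobeniusTrace_eq_zero_of_pow_eq_neg {c : F} {m : ℕ} (hc : c ^ p ^ (k * m) = -c) :
    frobeniusTrace p k (2 * m) c = 0 := by
  have hshift (i : ℕ) : c ^ p ^ (k * (m + i)) = -c ^ p ^ (k * i) := by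
    rw [mul_add, pow_add, pow_mul, hc, ← iterateFrobenius_def, map_neg, iterateFrobenius_def]
  simp [frobeniusTrace, two_mul, sum_range_add, hshift]

theorem pow_pow_mul_of_pow_pow_eq_neg {μ : F} (hμ : μ ^ p ^ k = -μ) (j : ℕ) :
    μ ^ p ^ (k * j) = (-1) ^ j * μ := by
  induction j with
  | zero => simp
  | succ j ih =>
    rw [mul_add_one, pow_add, pow_mul, ih, ← iterateFrobenius_def, map_mul, map_pow, map_neg,
      map_one, iterateFrobenius_def, hμ, pow_succ]
    ring

variable [Fintype F]

theorem frobeniusTrace_artinSchreier {n : ℕ} (hF : Fintype.card F = p ^ (k * n)) (y : F) :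
    frobeniusTrace p k n (artinSchreier p k y) = 0 := by
  have hstep (i : ℕ) :
      (y ^ p ^ k - y) ^ p ^ (k * i) = y ^ p ^ (k * (i + 1)) - y ^ p ^ (k * i) := by
    rw [sub_pow_expChar_pow, ← pow_mul, ← pow_add, mul_add_one, add_comm]
  simp only [frobeniusTrace, artinSchreier_apply, hstep]
  rw [sum_range_sub (fun i => y ^ p ^ (k * i)), ← hF, FiniteField.pow_card]
  simp

theorem natCard_ker_artinSchreier_eq_and_range_eq (hp : 1 < p) (hk : k ≠ 0) {n : ℕ} (hn : n ≠ 0)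
    (hF : Fintype.card F = p ^ (k * n)) :
    Nat.card (artinSchreier (F := F) p k).ker = p ^ k ∧
      ((artinSchreier (F := F) p k).range : Set F) = {c | frobeniusTrace p k n c = 0} := by
  set T := {c : F | frobeniusTrace p k n c = 0}
  have hsub : ((artinSchreier (F := F) p k).range : Set F) ⊆ T := by
    rintro _ ⟨y, rfl⟩
    exact frobeniusTrace_artinSchreier hF y
  have hrange : Nat.card (artinSchreier (F := F) p k).range ≤ p ^ (k * (n - 1)) :=
    (Set.ncard_le_ncard hsub).trans (ncard_frobeniusTrace_eq_zero_le hp hk hn)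
  have hprod : Nat.card (artinSchreier (F := F) p k).ker *
      Nat.card (artinSchreier (F := F) p k).range = p ^ k * p ^ (k * (n - 1)) := by
    rw [AddMonoidHom.natCard_ker_mul_natCard_range, Nat.card_eq_fintype_card, hF, ← pow_add,
      ← mul_one_add, Nat.add_sub_cancel' (Nat.one_le_iff_ne_zero.mpr hn)]
  obtain ⟨hker, hcard⟩ := (mul_eq_mul_iff_eq_and_eq_of_pos'
    (natCard_ker_artinSchreier_le hp hk) hrange (by positivity) Nat.card_pos).mp hprod
  refine ⟨hker, Set.eq_of_subset_of_ncard_le hsub ?_⟩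
  exact (ncard_frobeniusTrace_eq_zero_le hp hk hn).trans hcard.ge

theorem frobeniusTrace_mul_pow_eq_zero {t : ℕ} (ht : Odd t)
    (hF : Fintype.card F = p ^ (2 * k * t)) {μ : F} (hμ : μ ^ p ^ k = -μ) (x : F) :
    frobeniusTrace p k (2 * t) (μ * x ^ (p ^ (k * t) + 1)) = 0 := by
  apply frobeniusTrace_eq_zero_of_pow_eq_neg
  have hx : x ^ (p ^ (k * t) * p ^ (k * t)) = x := by
    rw [← pow_add, ← two_mul, ← mul_assoc, ← hF, FiniteField.pow_card]
  rw [mul_pow, pow_pow_mul_of_pow_pow_eq_neg hμ, ht.neg_one_pow, ← pow_mul, add_one_mul, pow_add,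
    hx]
  ring

end ArtinSchreier

theorem stmt_9_general (p k t : ℕ) (hp : p.Prime) (hk : 0 < k) (ht : Odd t)
    (F : Type*) [Field F] [Fintype F] (hF : Fintype.card F = p ^ (2 * k * t))
    (μ : F) (hμ : μ ^ p ^ k = -μ) :
    Nat.card {xy : F × F // xy.2 ^ p ^ k - xy.2 = μ * xy.1 ^ (p ^ (k * t) + 1)} =
      p ^ k * p ^ (2 * k * t) := by
  have : Fact p.Prime := ⟨hp⟩
  have : CharP F p := charP_of_card_eq_prime_pow hF
  obtain ⟨hker, hrange⟩ := natCard_ker_artinSchreier_eq_and_range_eq (F := F) hp.one_lt hk.ne'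
    (mul_ne_zero two_ne_zero ht.pos.ne') (hF.trans (by ring_nf))
  have hfiber (x : F) :
      Nat.card {y : F // y ^ p ^ k - y = μ * x ^ (p ^ (k * t) + 1)} = p ^ k := by
    have hmem : μ * x ^ (p ^ (k * t) + 1) ∈ (artinSchreier (F := F) p k).range := by
      rw [← SetLike.mem_coe, hrange]
      exact frobeniusTrace_mul_pow_eq_zero ht hF hμ x
    simpa only [artinSchreier_apply, hker] using
      (artinSchreier (F := F) p k).natCard_fiber_eq_natCard_ker hmem
  rw [Nat.card_congr (Equiv.subtypeProdEquivSigmaSubtype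
    fun x y : F => y ^ p ^ k - y = μ * x ^ (p ^ (k * t) + 1)), Nat.card_sigma]
  simp [hfiber, hF, mul_comm]

theorem stmt_9 (p k t : ℕ) (hp : p.Prime) (hodd : Odd p) (hk : 0 < k)
    (ht : Odd t) (htpos : 0 < t)
    (F : Type*) [Field F] [Fintype F] (hF : Fintype.card F = p ^ (2 * k * t))
    (μ : F) (hμ0 : μ ≠ 0) (hμsub : μ ^ p ^ (2 * k) = μ) (hμ : μ ^ p ^ k = -μ) :
    Nat.card {xy : F × F // xy.2 ^ p ^ k - xy.2 = μ * xy.1 ^ (p ^ (k * t) + 1)} =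
      p ^ k * p ^ (2 * k * t) :=
  stmt_9_general p k t hp hk ht F hF μ hμ
end

section
/- Let p be an odd prime, k a positive integer, and t an odd positive integer. If (x,y) satisfies y^{p^{kt}} + y = x^{p^{kt}+1} in a field of characteristic p, then (x, z) with z = Σ_{i=0}^{t−1} (−1)^i y^{p^{ki}} satisfies z^{p^k} + z = x^{p^{kt}+1}. -/
theorem stmt_12 (p k t : ℕ) (hp : p.Prime) (hodd : Odd p) (hk : 0 < k)
    (ht : Odd t) (htpos : 0 < t)
    (K : Type*) [Field K] [CharP K p] (x y : K)
    (h : y ^ p ^ (k * t) + y = x ^ (p ^ (k * t) + 1)) :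
    (∑ i ∈ Finset.range t, (-1 : K) ^ i * y ^ p ^ (k * i)) ^ p ^ k +
        ∑ i ∈ Finset.range t, (-1 : K) ^ i * y ^ p ^ (k * i) =
      x ^ (p ^ (k * t) + 1) := by
  haveI := hp.one_lt
  haveI : Fact p.Prime := ⟨hp⟩
  have hfrob : (∑ i ∈ Finset.range t, (-1 : K) ^ i * y ^ p ^ (k * i)) ^ p ^ k
      = ∑ i ∈ Finset.range t, (-1 : K) ^ i * y ^ p ^ (k * (i + 1)) := by
    rw [sum_pow_char_pow]
    refine Finset.sum_congr rfl fun i _ => ?_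
    have h1 : ((-1 : K) ^ i) ^ p ^ k = (-1 : K) ^ i := by
      rw [← pow_mul, mul_comm, pow_mul, Odd.neg_one_pow (hodd.pow)]
    have h2 : (y ^ p ^ (k * i)) ^ p ^ k = y ^ p ^ (k * (i + 1)) := by
      rw [← pow_mul, ← pow_add, mul_add, mul_one]
    rw [mul_pow, h1, h2]
  rw [hfrob, ← Finset.sum_add_distrib]
  have : ∀ i ∈ Finset.range t,
      (-1 : K) ^ i * y ^ p ^ (k * (i + 1)) + (-1 : K) ^ i * y ^ p ^ (k * i)
      = (fun i => (-1 : K) ^ i * y ^ p ^ (k * i)) i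
        - (fun i => (-1 : K) ^ i * y ^ p ^ (k * i)) (i + 1) := by
    intro i _
    simp [pow_succ]
    ring
  rw [Finset.sum_congr rfl this, Finset.sum_range_sub']
  simp [ht.neg_one_pow]
  rw [add_comm] at h
  simpa [sub_neg_eq_add] using h
end

section
/- Let p be an odd prime, k a positive integer, d a positive divisor of kt such that 2d does not divide kt, and let c = gcd(k, d). Then for every y ∈ F_{p^{2d}} there exists z ∈ F_{p^{2d}} with y^{p^k} + y = z^{p^c} + z; i.e., the image of y ↦ y^{p^k}+y on F_{p^{2d}} equals the image of y ↦ y^{p^c}+y on F_{p^{2d}}. -/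
section Aux

variable {F : Type*} [Field F] (p : ℕ)

private lemma aux_pow_pow (x : F) (a b : ℕ) :
    (x ^ p ^ a) ^ p ^ b = x ^ p ^ (a + b) := by
  rw [← pow_mul, ← pow_add]

private lemma aux_fix_mul (x : F) {a : ℕ} (ha : x ^ p ^ a = x) (q r : ℕ) :
    x ^ p ^ (a * q + r) = x ^ p ^ r := by
  induction q with
  | zero => simp
  | succ n ih =>
      have h : a * (n + 1) + r = a + (a * n + r) := by ring
      rw [h, ← aux_pow_pow, ha, ih]

private lemma aux_fix_gcd (x : F) (a b : ℕ) :
    x ^ p ^ a = x → x ^ p ^ b = x → x ^ p ^ (Nat.gcd a b) = x := by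
  induction a, b using Nat.gcd.induction with
  | H0 n => intro _ h2; simpa using h2
  | H1 a b hapos ih =>
      intro h1 h2
      rw [Nat.gcd_rec]
      refine ih ?_ h1
      have h3 := aux_fix_mul p x h1 (b / a) (b % a)
      rw [Nat.div_add_mod] at h3
      rw [← h3]; exact h2

end Aux

theorem stmt_16 (p k t d c : ℕ) (hp : p.Prime) (hodd : Odd p) (hk : 0 < k)
    (ht : 0 < t) (hd : 0 < d) (hdkt : d ∣ k * t) (h2d : ¬ (2 * d ∣ k * t))
    (hc : Nat.gcd k d = c)
    (F : Type*) [Field F] [Fintype F] (hF : Fintype.card F = p ^ (2 * d)) :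
    Set.range (fun y : F => y ^ p ^ k + y) =
      Set.range (fun y : F => y ^ p ^ c + y) := by
  classical
  haveI : Fact p.Prime := ⟨hp⟩
  -- characteristic of F is p
  haveI : CharP F (ringChar F) := ringChar.charP F
  obtain ⟨n, hqprime, hcard⟩ := FiniteField.card F (ringChar F)
  have hpq : p = ringChar F := by
    have hdvd : p ∣ (ringChar F) ^ (n : ℕ) := by
      rw [← hcard, hF]
      exact dvd_pow_self p (by omega)
    exact ((Nat.prime_dvd_prime_iff_eq hp hqprime).mp (hp.dvd_of_dvd_pow hdvd))
  haveI hcharp : CharP F p := by rw [hpq]; exact ringChar.charP F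
  haveI : ExpChar F p := ExpChar.prime hp
  -- basic Frobenius facts
  have frobadd : ∀ (m : ℕ) (x y : F), (x + y) ^ p ^ m = x ^ p ^ m + y ^ p ^ m :=
    fun m x y => add_pow_char_pow x y p m
  have frobneg : ∀ (m : ℕ) (x : F), (-x) ^ p ^ m = -(x ^ p ^ m) :=
    fun m x => Odd.neg_pow (hodd.pow) x
  -- arithmetic: c > 0, c ∣ k, c ∣ d, and k / c is odd
  have hc0 : 0 < c := hc ▸ Nat.gcd_pos_of_pos_left d hk
  have hck : c ∣ k := hc ▸ Nat.gcd_dvd_left k d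
  have hcd : c ∣ d := hc ▸ Nat.gcd_dvd_right k d
  set m := k / c with hm
  have hcm : c * m = k := Nat.mul_div_cancel' hck
  have hm0 : m ≠ 0 := by
    intro h; rw [h, mul_zero] at hcm; omega
  -- k / c is odd
  have hmodd : Odd m := by
    rw [← Nat.not_even_iff_odd, even_iff_two_dvd]
    intro h2m
    -- show 2 ∣ k*t/d, contradicting h2d
    have hs2 : ¬ (2 ∣ k * t / d) := by
      intro hh
      exact h2d (by
        have := (Nat.dvd_div_iff_mul_dvd hdkt).mp hh
        rwa [mul_comm d 2] at this)
    have hkt0 : k * t ≠ 0 := by positivity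
    have hs0 : k * t / d ≠ 0 := by
      intro h
      have := Nat.div_mul_cancel hdkt
      rw [h, zero_mul] at this
      exact hkt0 this.symm
    -- factorization at 2
    have hfs : (k * t / d).factorization 2 = 0 := by
      by_contra h
      exact hs2 ((Nat.Prime.dvd_iff_one_le_factorization Nat.prime_two hs0).mpr (by omega))
    have hfd : (k * t).factorization 2 - d.factorization 2 = 0 := by
      have h2 := congrArg (fun f => f 2) (Nat.factorization_div hdkt)
      simp only [Finsupp.tsub_apply] at h2
      rw [← h2]; exact hfs
    have hkle : k.factorization 2 ≤ d.factorization 2 := by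
      have hmul : (k * t).factorization 2 = k.factorization 2 + t.factorization 2 := by
        rw [Nat.factorization_mul (by omega) (by omega)]; simp
      omega
    have hfc : c.factorization 2 = k.factorization 2 := by
      rw [← hc]
      have := Nat.factorization_gcd (a := k) (b := d) (by omega) (by omega)
      have h2 := congrArg (fun f => f 2) this
      simp only [Finsupp.inf_apply] at h2
      simpa [min_eq_left hkle] using h2
    have hfm : m.factorization 2 = 0 := by
      have := Nat.factorization_div hck
      have h2 := congrArg (fun f => f 2) this
      simp only [Finsupp.tsub_apply] at h2
      rw [← hm] at h2
      omega
    exact absurd ((Nat.Prime.dvd_iff_one_le_factorization Nat.prime_two hm0).mp h2m)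
      (by omega)
  obtain ⟨s, hms⟩ := hmodd
  -- additive maps
  let f : F →+ F := AddMonoidHom.mk' (fun y : F => y ^ p ^ k + y)
    (fun x y => by simp only [frobadd]; ring)
  let g : F →+ F := AddMonoidHom.mk' (fun y : F => y ^ p ^ c + y)
    (fun x y => by simp only [frobadd]; ring)
  -- range inclusion: f's range ⊆ g's range
  have hsub : Set.range (fun y : F => y ^ p ^ k + y) ⊆
      Set.range (fun y : F => y ^ p ^ c + y) := by
    rintro _ ⟨y, rfl⟩
    have key : ∀ (j : ℕ), ∃ z : F, z ^ p ^ c + z = y ^ p ^ (c * (2 * j + 1)) + y := by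
      intro j
      induction j with
      | zero => exact ⟨y, by norm_num⟩
      | succ i ih =>
          obtain ⟨z, hz⟩ := ih
          refine ⟨z + (y ^ p ^ (c * (2 * i + 2)) - y ^ p ^ (c * (2 * i + 1))), ?_⟩
          have e1 : (y ^ p ^ (c * (2 * i + 2))) ^ p ^ c = y ^ p ^ (c * (2 * i + 3)) := by
            rw [aux_pow_pow]; ring_nf
          have e2 : (y ^ p ^ (c * (2 * i + 1))) ^ p ^ c = y ^ p ^ (c * (2 * i + 2)) := by
            rw [aux_pow_pow]; ring_nf
          have e3 : (z + (y ^ p ^ (c * (2 * i + 2)) - y ^ p ^ (c * (2 * i + 1)))) ^ p ^ c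
              = z ^ p ^ c + (y ^ p ^ (c * (2 * i + 3)) - y ^ p ^ (c * (2 * i + 2))) := by
            rw [sub_eq_add_neg, frobadd, frobadd, frobneg, e1, e2, ← sub_eq_add_neg]
          rw [e3]
          have h21 : 2 * (i + 1) + 1 = 2 * i + 3 := by ring
          rw [h21]
          linear_combination hz
    obtain ⟨z, hz⟩ := key s
    refine ⟨z, ?_⟩
    show z ^ p ^ c + z = y ^ p ^ k + y
    have hke : c * (2 * s + 1) = k := by rw [← hms]; exact hcm
    rw [hz, hke]
  -- kernel description
  have hxd : ∀ x : F, x ^ p ^ (2 * d) = x := by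
    intro x
    have := FiniteField.pow_card x
    rwa [hF] at this
  have hkerIff : ∀ x : F, x ^ p ^ k = -x ↔ x ^ p ^ c = -x := by
    intro x
    constructor
    · intro hxk
      have hx2k : x ^ p ^ (2 * k) = x := by
        have : (x ^ p ^ k) ^ p ^ k = x ^ p ^ (k + k) := aux_pow_pow p x k k
        rw [hxk, frobneg, hxk, neg_neg] at this
        rw [two_mul]; exact this.symm
      have hx2c : x ^ p ^ (2 * c) = x := by
        have := aux_fix_gcd p x (2 * k) (2 * d) hx2k (hxd x)
        rwa [Nat.gcd_mul_left, hc] at this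
      have hx2cs : x ^ p ^ (2 * c * s) = x := by
        have := aux_fix_mul p x hx2c s 0
        simpa using this
      have : (x ^ p ^ (2 * c * s)) ^ p ^ c = x ^ p ^ (2 * c * s + c) := aux_pow_pow p x _ c
      rw [hx2cs] at this
      have hke : k = 2 * c * s + c := by rw [← hcm, hms]; ring
      rw [this, ← hke, hxk]
    · intro hxc
      have key : ∀ j : ℕ, x ^ p ^ (c * (2 * j + 1)) = -x := by
        intro j
        induction j with
        | zero => simpa using hxc
        | succ i ih =>
            have e1 : x ^ p ^ (c * (2 * i + 3)) = ((x ^ p ^ (c * (2 * i + 1))) ^ p ^ c) ^ p ^ c := by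
              rw [aux_pow_pow, aux_pow_pow]; ring_nf
            rw [show 2 * (i + 1) + 1 = 2 * i + 3 by ring, e1, ih, frobneg, hxc, neg_neg, hxc]
      have := key s
      rwa [← hms, hcm] at this
  -- equal kernels
  have hker : f.ker = g.ker := by
    ext x
    simp only [AddMonoidHom.mem_ker, f, g, AddMonoidHom.mk'_apply]
    rw [add_eq_zero_iff_eq_neg, add_eq_zero_iff_eq_neg]
    exact hkerIff x
  -- equal cardinalities of ranges
  have hcards : Nat.card f.range = Nat.card g.range := by
    rw [← Nat.card_congr (QuotientAddGroup.quotientKerEquivRange f).toEquiv,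
      ← Nat.card_congr (QuotientAddGroup.quotientKerEquivRange g).toEquiv, hker]
  have hrf : (f.range : Set F) = Set.range (fun y : F => y ^ p ^ k + y) := by
    ext x; simp [f, AddMonoidHom.mem_range, Set.mem_range]
  have hrg : (g.range : Set F) = Set.range (fun y : F => y ^ p ^ c + y) := by
    ext x; simp [g, AddMonoidHom.mem_range, Set.mem_range]
  have hncard : (Set.range (fun y : F => y ^ p ^ c + y)).ncard ≤
      (Set.range (fun y : F => y ^ p ^ k + y)).ncard := by
    rw [← hrf, ← hrg, ← Nat.card_coe_set_eq, ← Nat.card_coe_set_eq]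
    exact le_of_eq hcards.symm
  exact Set.eq_of_subset_of_ncard_le hsub hncard (Set.toFinite _)
end
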